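/- arXiv:2007.07879 — 10 statements merged into one kernel-verified Lean document; each statement's English description precedes it below -/
import Mathlib

section
/- If (X, ≤) is a well-quasi-order, then the Alexandroff topology of ≤ on X is Noetherian, i.e., every open subset is compact. -/
open Set TopologicalSpace

/-- The Alexandroff topology of a relation: opens are the upwards-closed sets. -/
def alexandroff {X : Type*} (r : X → X → Prop) : TopologicalSpace X where
  IsOpen U := ∀ ⦃a b : X⦄, r a b → a ∈ U → b ∈ U
  isOpen_univ := fun _ _ _ _ => trivial
  isOpen_inter := fun U V hU hV a b hab h => ⟨hU hab h.1, hV hab h.2⟩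
  isOpen_sUnion := fun S hS a b hab h => by
    obtain ⟨U, hU, haU⟩ := h
    exact ⟨U, hU, hS U hU hab haU⟩

theorem wqo_alexandroff_noetherian {X : Type*} [Preorder X]
    (hwqo : ∀ f : ℕ → X, ∃ i j : ℕ, i < j ∧ f i ≤ f j) :
    ∀ U : Set X, (alexandroff (· ≤ · : X → X → Prop)).IsOpen U →
      @IsCompact X (alexandroff (· ≤ · : X → X → Prop)) U := by
  intro U _hU
  letI : TopologicalSpace X := alexandroff (· ≤ · : X → X → Prop)
  rw [isCompact_iff_finite_subcover]
  intro ι V hV hcover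
  by_contra hfin
  push_neg at hfin
  have key : ∀ s : Finset ι, ∃ x, x ∈ U ∧ x ∉ ⋃ i ∈ s, V i := by
    intro s
    obtain ⟨x, hx, hx'⟩ := Set.not_subset.1 (hfin s)
    exact ⟨x, hx, hx'⟩
  choose g hgU hg using key
  have hidx : ∀ x, x ∈ U → ∃ i, x ∈ V i := fun x hx => Set.mem_iUnion.1 (hcover hx)
  choose idx hidx using hidx
  haveI := Classical.decEq ι
  let s : ℕ → Finset ι := fun n =>
    Nat.rec ∅ (fun _ sn => insert (idx (g sn) (hgU sn)) sn) n
  have hmono : ∀ m n, m ≤ n → s m ⊆ s n := by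
    intro m n hmn
    induction n with
    | zero => simp_all
    | succ k ih =>
      rcases Nat.lt_succ_iff_lt_or_eq.1 (Nat.lt_succ_of_le hmn) with h | h
      · exact (ih (Nat.lt_succ_iff.1 h)).trans (Finset.subset_insert _ _)
      · subst h; exact Finset.Subset.refl _
  set f : ℕ → X := fun n => g (s n) with hf
  have hmem : ∀ n, idx (f n) (hgU (s n)) ∈ s (n + 1) := fun n =>
    Finset.mem_insert_self _ _
  obtain ⟨a, b, hab, hle⟩ := hwqo f
  have hi : idx (f a) (hgU (s a)) ∈ s b := hmono (a + 1) b hab (hmem a)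
  have hfa : f a ∈ V (idx (f a) (hgU (s a))) := hidx _ _
  have hfb : f b ∈ V (idx (f a) (hgU (s a))) := hV _ hle hfa
  exact hg (s b) (Set.mem_iUnion₂.2 ⟨_, hi, hfb⟩)
end

section
/- If the Alexandroff topology of a quasi-order (X, ≤) is Noetherian, then (X, ≤) is a well-quasi-order. -/
open Set TopologicalSpace

theorem alexandroff_noetherian_wqo {X : Type*} [Preorder X]
    (hnoeth : ∀ U : Set X, (alexandroff (· ≤ · : X → X → Prop)).IsOpen U →
      @IsCompact X (alexandroff (· ≤ · : X → X → Prop)) U) :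
    ∀ f : ℕ → X, ∃ i j : ℕ, i < j ∧ f i ≤ f j := by
  intro f
  letI : TopologicalSpace X := alexandroff (· ≤ · : X → X → Prop)
  set V : ℕ → Set X := fun n => {x | f n ≤ x} with hV
  have hVopen : ∀ n, IsOpen (V n) := fun n a b hab ha => le_trans ha hab
  have hUopen : IsOpen (⋃ n, V n) := isOpen_iUnion hVopen
  have hcomp : IsCompact (⋃ n, V n) := hnoeth _ hUopen
  obtain ⟨t, ht⟩ := hcomp.elim_finite_subcover V hVopen (subset_refl _)
  set j := (t.sup id) + 1 with hj
  have hfj : f j ∈ ⋃ n, V n := mem_iUnion.2 ⟨j, le_refl _⟩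
  obtain ⟨i, hit, hle⟩ := mem_iUnion₂.1 (ht hfj)
  exact ⟨i, j, Nat.lt_succ_of_le (Finset.le_sup (f := id) hit), hle⟩
end

section
/- Let (X, τ) be a topological space and L a bounded sublattice of the powerset of X such that every set in τ ∩ L is compact in the topology generated by τ ∩ L. Then in the space (X, ⟨τ ∩ L⟩), the collection of compact open sets equals τ ∩ L; in particular it is a bounded sublattice of the powerset of X generating the topology. -/
open Set TopologicalSpace

/-- A bounded sublattice of the powerset of `X`. -/
def IsBoundedSublattice {X : Type*} (L : Set (Set X)) : Prop :=
  ∅ ∈ L ∧ Set.univ ∈ L ∧ (∀ U ∈ L, ∀ V ∈ L, U ∪ V ∈ L) ∧ ∀ U ∈ L, ∀ V ∈ L, U ∩ V ∈ L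

/-- A topology is pre-spectral if its compact open sets form a bounded
sublattice of the powerset that generates the topology. -/
def IsPreSpectral {X : Type*} (t : TopologicalSpace X) : Prop :=
  IsBoundedSublattice {U : Set X | @IsCompact X t U ∧ t.IsOpen U} ∧
  TopologicalSpace.generateFrom {U : Set X | @IsCompact X t U ∧ t.IsOpen U} = t

lemma finset_biUnion_mem {X ι : Type*} {L : Set (Set X)}
    (hempt : ∅ ∈ L) (hun : ∀ U ∈ L, ∀ V ∈ L, U ∪ V ∈ L)
    (s : Finset ι) (f : ι → Set X) (hf : ∀ i ∈ s, f i ∈ L) :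
    (⋃ i ∈ s, f i) ∈ L := by
  classical
  induction s using Finset.induction with
  | empty => simpa using hempt
  | @insert a s hx ih =>
    rw [Finset.set_biUnion_insert]
    exact hun _ (hf a (Finset.mem_insert_self a s)) _
      (ih fun i hi => hf i (Finset.mem_insert_of_mem hi))

lemma compactOpen_mem {X : Type*} (S : Set (Set X))
    (hempt : ∅ ∈ S) (huniv : Set.univ ∈ S)
    (hun : ∀ U ∈ S, ∀ V ∈ S, U ∪ V ∈ S)
    (hint : ∀ U ∈ S, ∀ V ∈ S, U ∩ V ∈ S)
    (U : Set X) (hc : @IsCompact X (generateFrom S) U)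
    (ho : (generateFrom S).IsOpen U) : U ∈ S := by
  letI : TopologicalSpace X := generateFrom S
  have hbasis : IsTopologicalBasis S := by
    refine ⟨fun t₁ h₁ t₂ h₂ x hx => ⟨t₁ ∩ t₂, hint _ h₁ _ h₂, hx, subset_rfl⟩, ?_, rfl⟩
    exact Set.eq_univ_of_univ_subset (subset_sUnion_of_mem huniv)
  have hch : ∀ x : U, ∃ V, V ∈ S ∧ (x : X) ∈ V ∧ V ⊆ U :=
    fun x => hbasis.exists_subset_of_mem_open x.2 ho
  choose V hVS hxV hVU using hch
  obtain ⟨s, hs⟩ := hc.elim_finite_subcover V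
    (fun i => hbasis.isOpen (hVS i)) (fun x hx => mem_iUnion.2 ⟨⟨x, hx⟩, hxV _⟩)
  have : U = ⋃ i ∈ s, V i := by
    apply Set.Subset.antisymm hs
    exact Set.iUnion₂_subset fun i _ => hVU i
  rw [this]
  exact finset_biUnion_mem hempt hun s V fun i _ => hVS i

theorem lpps_compact_opens_eq {X : Type*} (t : TopologicalSpace X) (L : Set (Set X))
    (hL : IsBoundedSublattice L)
    (hcomp : ∀ U ∈ {U : Set X | t.IsOpen U} ∩ L,
      @IsCompact X (generateFrom ({U : Set X | t.IsOpen U} ∩ L)) U) :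
    {U : Set X | @IsCompact X (generateFrom ({U : Set X | t.IsOpen U} ∩ L)) U ∧
        (generateFrom ({U : Set X | t.IsOpen U} ∩ L)).IsOpen U}
      = {U : Set X | t.IsOpen U} ∩ L ∧
    IsBoundedSublattice
      {U : Set X | @IsCompact X (generateFrom ({U : Set X | t.IsOpen U} ∩ L)) U ∧
        (generateFrom ({U : Set X | t.IsOpen U} ∩ L)).IsOpen U} ∧
    generateFrom
      {U : Set X | @IsCompact X (generateFrom ({U : Set X | t.IsOpen U} ∩ L)) U ∧
        (generateFrom ({U : Set X | t.IsOpen U} ∩ L)).IsOpen U}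
      = generateFrom ({U : Set X | t.IsOpen U} ∩ L) := by
  obtain ⟨hempt, huniv, hun, hint⟩ := hL
  set S : Set (Set X) := {U : Set X | t.IsOpen U} ∩ L with hS
  have hSempt : ∅ ∈ S := ⟨@isOpen_empty X t, hempt⟩
  have hSuniv : Set.univ ∈ S := ⟨@isOpen_univ X t, huniv⟩
  have hSun : ∀ U ∈ S, ∀ V ∈ S, U ∪ V ∈ S :=
    fun U hU V hV => ⟨by letI := t; exact IsOpen.union hU.1 hV.1, hun _ hU.2 _ hV.2⟩
  have hSint : ∀ U ∈ S, ∀ V ∈ S, U ∩ V ∈ S :=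
    fun U hU V hV => ⟨by letI := t; exact IsOpen.inter hU.1 hV.1, hint _ hU.2 _ hV.2⟩
  have heq : {U : Set X | @IsCompact X (generateFrom S) U ∧ (generateFrom S).IsOpen U} = S := by
    ext U
    constructor
    · rintro ⟨hc, ho⟩
      exact compactOpen_mem S hSempt hSuniv hSun hSint U hc ho
    · intro hU
      exact ⟨hcomp U hU, isOpen_generateFrom_of_mem hU⟩
  refine ⟨heq, ?_, ?_⟩
  · rw [heq]; exact ⟨hSempt, hSuniv, hSun, hSint⟩
  · rw [heq]
end

section
/- Let (X, τ) be a topological space in which the compact open sets form a bounded sublattice generating τ, and suppose every subset Y of X with the induced topology also has this property. Then X is Noetherian. -/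
open Set TopologicalSpace

theorem noetherian_of_all_subspaces_prespectral {X : Type*} [t : TopologicalSpace X]
    (h : ∀ Y : Set X, IsPreSpectral (t.induced (Subtype.val : Y → X))) :
    NoetherianSpace X := by
  rw [TopologicalSpace.noetherianSpace_iff_isCompact]
  intro Y
  have hc : IsCompact (Set.univ : Set Y) := (h Y).1.2.1.1
  rw [isCompact_iff_isCompact_univ]
  exact hc
end

section
/- Let X be a pre-spectral space and Y ⊆ X a finite positive Boolean combination (finite unions and intersections) of closed subsets of X and compact open subsets of X. Then for every compact open set U of X, the set U ∩ Y is compact in the subspace topology on Y; consequently Y with the subspace topology is pre-spectral and the inclusion Y → X is a spectral map. -/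
open Set TopologicalSpace

/-- Finite positive Boolean combinations of closed sets and compact open sets. -/
inductive PosBoolComb {X : Type*} [TopologicalSpace X] : Set X → Prop
  | closed {F : Set X} : IsClosed F → PosBoolComb F
  | compactOpen {U : Set X} : IsCompact U → IsOpen U → PosBoolComb U
  | union {A B : Set X} : PosBoolComb A → PosBoolComb B → PosBoolComb (A ∪ B)
  | inter {A B : Set X} : PosBoolComb A → PosBoolComb B → PosBoolComb (A ∩ B)

/-- Decompose a positive Boolean combination as a finite union of
(closed ∩ compact open). -/
lemma PosBoolComb.decomp {X : Type*} [t : TopologicalSpace X] (hX : IsPreSpectral t)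
    {Y : Set X} (hY : PosBoolComb Y) :
    ∃ (ι : Type) (_ : Finite ι) (F V : ι → Set X),
      (∀ i, IsClosed (F i)) ∧ (∀ i, IsCompact (V i) ∧ IsOpen (V i)) ∧
      Y = ⋃ i, F i ∩ V i := by
  induction hY with
  | @closed F hF =>
      exact ⟨PUnit, inferInstance, fun _ => F, fun _ => univ,
        fun _ => hF, fun _ => ⟨hX.1.2.1.1, hX.1.2.1.2⟩, by simp [Set.iUnion_const]⟩
  | @compactOpen U hc ho =>
      exact ⟨PUnit, inferInstance, fun _ => univ, fun _ => U,
        fun _ => isClosed_univ, fun _ => ⟨hc, ho⟩, by simp [Set.iUnion_const]⟩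
  | union _ _ ihA ihB =>
      obtain ⟨ι₁, _, F₁, V₁, hF₁, hV₁, hA⟩ := ihA
      obtain ⟨ι₂, _, F₂, V₂, hF₂, hV₂, hB⟩ := ihB
      refine ⟨ι₁ ⊕ ι₂, inferInstance, Sum.elim F₁ F₂, Sum.elim V₁ V₂,
        ?_, ?_, ?_⟩
      · rintro (i | i) <;> [exact hF₁ i; exact hF₂ i]
      · rintro (i | i) <;> [exact hV₁ i; exact hV₂ i]
      · rw [hA, hB]
        rw [show (⋃ i, Sum.elim F₁ F₂ i ∩ Sum.elim V₁ V₂ i) =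
            (⋃ i : ι₁, F₁ i ∩ V₁ i) ∪ ⋃ i : ι₂, F₂ i ∩ V₂ i from iUnion_sum]
  | inter _ _ ihA ihB =>
      obtain ⟨ι₁, _, F₁, V₁, hF₁, hV₁, hA⟩ := ihA
      obtain ⟨ι₂, _, F₂, V₂, hF₂, hV₂, hB⟩ := ihB
      refine ⟨ι₁ × ι₂, inferInstance, fun p => F₁ p.1 ∩ F₂ p.2,
        fun p => V₁ p.1 ∩ V₂ p.2,
        fun p => (hF₁ p.1).inter (hF₂ p.2),
        fun p => ⟨(hX.1.2.2.2 _ (hV₁ p.1) _ (hV₂ p.2)).1,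
          (hX.1.2.2.2 _ (hV₁ p.1) _ (hV₂ p.2)).2⟩, ?_⟩
      rw [hA, hB]
      ext x
      simp only [mem_inter_iff, mem_iUnion, Prod.exists]
      constructor
      · rintro ⟨⟨i, hi⟩, ⟨j, hj⟩⟩
        exact ⟨i, j, ⟨hi.1, hj.1⟩, hi.2, hj.2⟩
      · rintro ⟨i, j, ⟨hi, hj⟩, hi', hj'⟩
        exact ⟨⟨i, hi, hi'⟩, ⟨j, hj, hj'⟩⟩

lemma key_inter {X : Type*} [t : TopologicalSpace X] (hX : IsPreSpectral t)
    {Y : Set X} (hY : PosBoolComb Y) :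
    ∀ U : Set X, IsCompact U → IsOpen U → IsCompact (U ∩ Y) := by
  intro U hUc hUo
  obtain ⟨ι, _, F, V, hF, hV, hYeq⟩ := hY.decomp hX
  have : U ∩ Y = ⋃ i, (U ∩ V i) ∩ F i := by
    rw [hYeq]; ext x
    simp only [mem_inter_iff, mem_iUnion]
    tauto
  rw [this]
  exact isCompact_iUnion fun i =>
    ((hX.1.2.2.2 U ⟨hUc, hUo⟩ (V i) (hV i)).1).inter_right (hF i)

lemma prespectral_basis {X : Type*} [t : TopologicalSpace X] (hX : IsPreSpectral t) :
    IsTopologicalBasis {U : Set X | IsCompact U ∧ IsOpen U} := by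
  refine ⟨fun t₁ h₁ t₂ h₂ x hx => ⟨t₁ ∩ t₂, hX.1.2.2.2 _ h₁ _ h₂, hx, Subset.rfl⟩,
    ?_, hX.2.symm⟩
  exact eq_univ_of_univ_subset (subset_sUnion_of_mem hX.1.2.1)

theorem prespectral_subspace_of_posBoolComb
    {X : Type*} [t : TopologicalSpace X] (hX : IsPreSpectral t)
    (Y : Set X) (hY : PosBoolComb Y) :
    (∀ U : Set X, IsCompact U → IsOpen U →
      IsCompact ((Subtype.val : Y → X) ⁻¹' U)) ∧
    IsPreSpectral (inferInstance : TopologicalSpace Y) := by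
  have emb : Topology.IsEmbedding (Subtype.val : Y → X) := Topology.IsEmbedding.subtypeVal
  have part1 : ∀ U : Set X, IsCompact U → IsOpen U →
      IsCompact ((Subtype.val : Y → X) ⁻¹' U) := by
    intro U hUc hUo
    rw [emb.isCompact_iff, Subtype.image_preimage_coe, inter_comm]
    exact key_inter hX hY U hUc hUo
  refine ⟨part1, ?_⟩
  -- the compact opens of `Y`
  set LY : Set (Set Y) := {K : Set Y | IsCompact K ∧ IsOpen K} with hLY
  -- preimages of compact opens of `X` are compact open in `Y`
  have hpre : ∀ U : Set X, IsCompact U → IsOpen U →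
      ((Subtype.val : Y → X) ⁻¹' U) ∈ LY := fun U hc ho =>
    ⟨part1 U hc ho, ho.preimage continuous_subtype_val⟩
  -- every compact open of `Y` is the preimage of a compact open of `X`
  have hchar : ∀ K ∈ LY, ∃ U : Set X, IsCompact U ∧ IsOpen U ∧
      K = (Subtype.val : Y → X) ⁻¹' U := by
    rintro K ⟨hKc, hKo⟩
    obtain ⟨O, hOo, hOK⟩ := isOpen_induced_iff.mp hKo
    obtain ⟨S, hSB, hOS⟩ := (prespectral_basis hX).open_eq_sUnion hOo
    have hcov : K ⊆ ⋃ s : S, (Subtype.val : Y → X) ⁻¹' (s : Set X) := by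
      rw [← hOK, hOS]
      rintro x ⟨s, hsS, hxs⟩
      exact mem_iUnion.mpr ⟨⟨s, hsS⟩, hxs⟩
    obtain ⟨F, hF⟩ := hKc.elim_finite_subcover
      (fun s : S => (Subtype.val : Y → X) ⁻¹' (s : Set X))
      (fun s => (hSB s.2).2.preimage continuous_subtype_val) hcov
    refine ⟨⋃ s ∈ F, (s : Set X), ?_, ?_, ?_⟩
    · exact F.isCompact_biUnion (fun s _ => (hSB s.2).1)
    · exact isOpen_biUnion (fun s _ => (hSB s.2).2)
    · apply Subset.antisymm
      · intro x hx
        obtain ⟨s, hsF, hxs⟩ := mem_iUnion₂.mp (hF hx)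
        exact mem_preimage.mpr (mem_biUnion hsF hxs)
      · intro x hx
        obtain ⟨s, hsF, hxs⟩ := mem_iUnion₂.mp hx
        rw [← hOK]
        refine mem_preimage.mpr ?_
        rw [hOS]
        exact ⟨s, s.2, hxs⟩
  constructor
  · refine ⟨⟨isCompact_empty, isOpen_empty⟩, ?_, ?_, ?_⟩
    · have : (univ : Set Y) = (Subtype.val : Y → X) ⁻¹' univ := by simp
      rw [this]
      exact hpre univ hX.1.2.1.1 hX.1.2.1.2
    · rintro K₁ ⟨h₁c, h₁o⟩ K₂ ⟨h₂c, h₂o⟩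
      exact ⟨h₁c.union h₂c, IsOpen.union h₁o h₂o⟩
    · intro K₁ h₁ K₂ h₂
      obtain ⟨U₁, hU₁c, hU₁o, rfl⟩ := hchar K₁ h₁
      obtain ⟨U₂, hU₂c, hU₂o, rfl⟩ := hchar K₂ h₂
      rw [← preimage_inter]
      have h12 := hX.1.2.2.2 U₁ ⟨hU₁c, hU₁o⟩ U₂ ⟨hU₂c, hU₂o⟩
      exact hpre _ h12.1 h12.2
  · -- generation
    have hbX := prespectral_basis hX
    have hbY : IsTopologicalBasis
        ((preimage (Subtype.val : Y → X)) '' {U : Set X | IsCompact U ∧ IsOpen U}) :=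
      hbX.isInducing emb.toIsInducing
    have hsub : ((preimage (Subtype.val : Y → X)) '' {U : Set X | IsCompact U ∧ IsOpen U})
        ⊆ LY := by
      rintro _ ⟨U, ⟨hc, ho⟩, rfl⟩
      exact hpre U hc ho
    have h1 : generateFrom LY ≤ (inferInstance : TopologicalSpace Y) :=
      le_trans (generateFrom_anti hsub) (le_of_eq hbY.eq_generateFrom.symm)
    exact le_antisymm h1 (le_generateFrom fun s hs => hs.2)
end

section
/- Let (X, τ) be a topological space, L a bounded sublattice of ℘(X) such that (X, ⟨τ∩L⟩) is a logically presented pre-spectral space (every set in τ∩L is compact in ⟨τ∩L⟩), and let Y be a finite Boolean combination of sets in τ∩L. Then every set of the form V ∩ Y with V ∈ L that is open in the subspace topology induced by ⟨τ∩L⟩ on Y is the intersection with Y of some set in τ∩L, and hence compact in Y. -/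
open Set TopologicalSpace Topology

/-- Finite Boolean combinations of sets from a family `S`. -/
inductive BoolComb {X : Type*} (S : Set (Set X)) : Set X → Prop
  | base {U : Set X} : U ∈ S → BoolComb S U
  | compl {U : Set X} : BoolComb S U → BoolComb S Uᶜ
  | union {A B : Set X} : BoolComb S A → BoolComb S B → BoolComb S (A ∪ B)
  | inter {A B : Set X} : BoolComb S A → BoolComb S B → BoolComb S (A ∩ B)

/-- Auxiliary: "normal forms", i.e. finite unions of sets of the form `U ∩ Cᶜ`
with `U, C ∈ S`. -/
inductive NF {X : Type*} (S : Set (Set X)) : Set X → Prop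
  | piece {U C : Set X} : U ∈ S → C ∈ S → NF S (U ∩ Cᶜ)
  | empty : NF S ∅
  | union {A B : Set X} : NF S A → NF S B → NF S (A ∪ B)

section LppsAux

variable {X : Type*} {S : Set (Set X)}

theorem NF.inter (hS : IsBoundedSublattice S) {A B : Set X}
    (hA : NF S A) (hB : NF S B) : NF S (A ∩ B) := by
  induction hA generalizing B with
  | @piece U C hU hC =>
    induction hB with
    | @piece U' C' hU' hC' =>
      have : (U ∩ Cᶜ) ∩ (U' ∩ C'ᶜ) = (U ∩ U') ∩ (C ∪ C')ᶜ := by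
        ext x; simp only [mem_inter_iff, mem_compl_iff, mem_union]; tauto
      rw [this]
      exact NF.piece (hS.2.2.2 _ hU _ hU') (hS.2.2.1 _ hC _ hC')
    | empty => rw [inter_empty]; exact NF.empty
    | union h1 h2 ih1 ih2 =>
      rw [inter_union_distrib_left]
      exact NF.union ih1 ih2
  | empty => rw [empty_inter]; exact NF.empty
  | union h1 h2 ih1 ih2 =>
    rw [union_inter_distrib_right]
    exact NF.union (ih1 hB) (ih2 hB)

theorem NF.compl (hS : IsBoundedSublattice S) {A : Set X}
    (hA : NF S A) : NF S Aᶜ := by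
  induction hA with
  | @piece U C hU hC =>
    have : (U ∩ Cᶜ)ᶜ = (Set.univ ∩ Uᶜ) ∪ (C ∩ ∅ᶜ) := by
      ext x
      simp only [mem_compl_iff, mem_inter_iff, mem_union, mem_univ, mem_empty_iff_false,
        not_and, not_not, true_and, not_false_iff, and_true]
      tauto
    rw [this]
    exact NF.union (NF.piece hS.2.1 hU) (NF.piece hC hS.1)
  | empty =>
    have : (∅ : Set X)ᶜ = Set.univ ∩ (∅ : Set X)ᶜ := by simp
    rw [this]
    exact NF.piece hS.2.1 hS.1
  | union h1 h2 ih1 ih2 =>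
    rw [compl_union]
    exact NF.inter hS ih1 ih2

theorem BoolComb.nf (hS : IsBoundedSublattice S) {A : Set X}
    (hA : BoolComb S A) : NF S A := by
  induction hA with
  | @base U hU =>
    have : U = U ∩ (∅ : Set X)ᶜ := by simp
    rw [this]
    exact NF.piece hU hS.1
  | compl _ ih => exact NF.compl hS ih
  | union _ _ ih1 ih2 => exact NF.union ih1 ih2
  | inter _ _ ih1 ih2 => exact NF.inter hS ih1 ih2

/-- The family `opens ∩ L` is a bounded sublattice. -/
theorem lpps_good (t : TopologicalSpace X) {L : Set (Set X)} (hL : IsBoundedSublattice L) :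
    IsBoundedSublattice ({U : Set X | t.IsOpen U} ∩ L) := by
  letI := t
  obtain ⟨h0, h1, hu, hi⟩ := hL
  refine ⟨⟨isOpen_empty, h0⟩, ⟨isOpen_univ, h1⟩, ?_, ?_⟩
  · rintro U ⟨hUo, hUL⟩ V ⟨hVo, hVL⟩
    exact ⟨IsOpen.union hUo hVo, hu _ hUL _ hVL⟩
  · rintro U ⟨hUo, hUL⟩ V ⟨hVo, hVL⟩
    exact ⟨IsOpen.inter hUo hVo, hi _ hUL _ hVL⟩

/-- Every point of a `generateFrom S`-open set lies in a basic open from `S`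
inside the set, provided `S` is a bounded sublattice. -/
theorem lpps_exists_basic (hS : IsBoundedSublattice S) {W : Set X}
    (hW : IsOpen[generateFrom S] W) :
    ∀ x ∈ W, ∃ B ∈ S, x ∈ B ∧ B ⊆ W := by
  have hW' : TopologicalSpace.GenerateOpen S W := hW
  clear hW
  induction hW' with
  | basic U hU => exact fun x hx => ⟨U, hU, hx, le_refl _⟩
  | univ => exact fun x _ => ⟨Set.univ, hS.2.1, trivial, le_refl _⟩
  | inter U V hU hV ihU ihV =>
    intro x hx
    obtain ⟨B1, hB1, hxB1, hB1U⟩ := ihU x hx.1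
    obtain ⟨B2, hB2, hxB2, hB2V⟩ := ihV x hx.2
    exact ⟨B1 ∩ B2, hS.2.2.2 _ hB1 _ hB2, ⟨hxB1, hxB2⟩,
      fun y hy => ⟨hB1U hy.1, hB2V hy.2⟩⟩
  | sUnion ts h ih =>
    intro x hx
    obtain ⟨u, hu, hxu⟩ := hx
    obtain ⟨B, hB, hxB, hBu⟩ := ih u hu x hxu
    exact ⟨B, hB, hxB, hBu.trans (subset_sUnion_of_mem hu)⟩

theorem lpps_finset_biUnion_mem (hS : IsBoundedSublattice S) {ι : Type*}
    (f : Finset ι) (g : ι → Set X) (hg : ∀ i ∈ f, g i ∈ S) :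
    (⋃ i ∈ f, g i) ∈ S := by
  classical
  induction f using Finset.induction with
  | empty => simpa using hS.1
  | @insert a f ha ih =>
    rw [Finset.set_biUnion_insert]
    exact hS.2.2.1 _ (hg a (Finset.mem_insert_self a f)) _
      (ih fun i hi => hg i (Finset.mem_insert_of_mem hi))

/-- Shrinking lemma: a compact set contained in `W ∪ C` with `W` open and `C ∈ S`
is contained in `T ∪ C` for some `T ∈ S` with `T ⊆ W`. -/
theorem lpps_exists_shrink (hS : IsBoundedSublattice S) {K W C : Set X}
    (hK : @IsCompact X (generateFrom S) K) (hW : IsOpen[generateFrom S] W)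
    (hC : C ∈ S) (hKW : K ⊆ W ∪ C) :
    ∃ T ∈ S, T ⊆ W ∧ K ⊆ T ∪ C := by
  classical
  letI : TopologicalSpace X := generateFrom S
  have hCopen : IsOpen C := isOpen_generateFrom_of_mem hC
  have hopen : ∀ b : {B : Set X // B ∈ S ∧ B ⊆ W}, IsOpen (b.1 ∪ C) := fun b =>
    (isOpen_generateFrom_of_mem b.2.1).union hCopen
  have hcover : K ⊆ ⋃ b : {B : Set X // B ∈ S ∧ B ⊆ W}, (b.1 ∪ C) := by
    intro x hx
    by_cases hxC : x ∈ C
    · exact mem_iUnion.2 ⟨⟨∅, hS.1, empty_subset _⟩, Or.inr hxC⟩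
    · have hxW : x ∈ W := (hKW hx).resolve_right hxC
      obtain ⟨B, hB, hxB, hBW⟩ := lpps_exists_basic hS hW x hxW
      exact mem_iUnion.2 ⟨⟨B, hB, hBW⟩, Or.inl hxB⟩
  obtain ⟨fin, hfin⟩ := hK.elim_finite_subcover
    (fun b : {B : Set X // B ∈ S ∧ B ⊆ W} => b.1 ∪ C) hopen hcover
  refine ⟨⋃ b ∈ fin, b.1, lpps_finset_biUnion_mem hS fin _ (fun b _ => b.2.1), ?_, ?_⟩
  · exact iUnion₂_subset fun b _ => b.2.2
  · intro x hx
    obtain ⟨b, hb, hxb⟩ := mem_iUnion₂.1 (hfin hx)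
    rcases hxb with h | h
    · exact Or.inl (mem_iUnion₂.2 ⟨b, hb, h⟩)
    · exact Or.inr h

end LppsAux

theorem lpps_relativisation {X : Type*} (t : TopologicalSpace X) (L : Set (Set X))
    (hL : IsBoundedSublattice L)
    (hlpps : ∀ U ∈ {U : Set X | t.IsOpen U} ∩ L,
      @IsCompact X (generateFrom ({U : Set X | t.IsOpen U} ∩ L)) U)
    (Y : Set X) (hY : BoolComb ({U : Set X | t.IsOpen U} ∩ L) Y)
    (V : Set X) (hV : V ∈ L)
    (hopen : ∃ W : Set X, (generateFrom ({U : Set X | t.IsOpen U} ∩ L)).IsOpen W ∧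
      V ∩ Y = W ∩ Y) :
    (∃ W ∈ {U : Set X | t.IsOpen U} ∩ L, V ∩ Y = W ∩ Y) ∧
    @IsCompact Y
      ((generateFrom ({U : Set X | t.IsOpen U} ∩ L)).induced (Subtype.val : Y → X))
      ((Subtype.val : Y → X) ⁻¹' V) := by
  classical
  set S : Set (Set X) := {U : Set X | t.IsOpen U} ∩ L with hSdef
  have hSgood : IsBoundedSublattice S := lpps_good t hL
  -- the generated topology is coarser than `t`
  have hle : t ≤ generateFrom S := le_generateFrom_iff_subset_isOpen.2 (fun U hU => hU.1)
  have htopen : ∀ {U : Set X}, IsOpen[generateFrom S] U → t.IsOpen U :=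
    fun {U} h => (TopologicalSpace.le_def.mp hle) U h
  have hNF : NF S Y := BoolComb.nf hSgood hY
  letI : TopologicalSpace X := generateFrom S
  obtain ⟨W, hWopen, hWeq⟩ := hopen
  -- key step: find `W' ∈ S` with `W' ⊆ W` and `V ∩ Z = W' ∩ Z`
  have key : ∀ {Z : Set X}, NF S Z → ∀ {W : Set X}, IsOpen[generateFrom S] W →
      V ∩ Z = W ∩ Z → ∃ W' ∈ S, W' ⊆ W ∧ V ∩ Z = W' ∩ Z := by
    intro Z hZ
    induction hZ with
    | @piece U C hU hC =>
      intro W hWopen h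
      have hUopen : IsOpen[generateFrom S] U := isOpen_generateFrom_of_mem hU
      have hCopen : IsOpen[generateFrom S] C := isOpen_generateFrom_of_mem hC
      -- the set `K = (W ∩ U) ∪ C = (V ∩ U) ∪ C` is open, in `L`, hence in `S`, compact
      have hKeq : (W ∩ U) ∪ C = (V ∩ U) ∪ C := by
        ext x
        constructor
        · rintro (⟨hxW, hxU⟩ | hxC)
          · by_cases hxC : x ∈ C
            · exact Or.inr hxC
            · have hmem : x ∈ W ∩ (U ∩ Cᶜ) := ⟨hxW, hxU, hxC⟩
              rw [← h] at hmem
              exact Or.inl ⟨hmem.1, hxU⟩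
          · exact Or.inr hxC
        · rintro (⟨hxV, hxU⟩ | hxC)
          · by_cases hxC : x ∈ C
            · exact Or.inr hxC
            · have hmem : x ∈ V ∩ (U ∩ Cᶜ) := ⟨hxV, hxU, hxC⟩
              rw [h] at hmem
              exact Or.inl ⟨hmem.1, hxU⟩
          · exact Or.inr hxC
      have hKopen : IsOpen[generateFrom S] ((W ∩ U) ∪ C) :=
        (hWopen.inter hUopen).union hCopen
      have hKS : (W ∩ U) ∪ C ∈ S := by
        refine ⟨htopen hKopen, ?_⟩
        rw [hKeq]
        exact hL.2.2.1 _ (hL.2.2.2 _ hV _ hU.2) _ hC.2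
      have hKcompact := hlpps _ hKS
      obtain ⟨T, hTS, hTW, hKT⟩ := lpps_exists_shrink hSgood hKcompact
        (hWopen.inter hUopen) hC Set.Subset.rfl
      refine ⟨T, hTS, hTW.trans inter_subset_left, ?_⟩
      apply Set.Subset.antisymm
      · rintro x ⟨hxV, hxU, hxC⟩
        have hxK : x ∈ (W ∩ U) ∪ C := by
          rw [hKeq]; exact Or.inl ⟨hxV, hxU⟩
        rcases hKT hxK with hT | hCx
        · exact ⟨hT, hxU, hxC⟩
        · exact absurd hCx hxC
      · rintro x ⟨hxT, hxU, hxC⟩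
        have hmem : x ∈ W ∩ (U ∩ Cᶜ) := ⟨(hTW hxT).1, hxU, hxC⟩
        rw [← h] at hmem
        exact hmem
    | empty =>
      intro W hWopen _
      exact ⟨∅, hSgood.1, empty_subset _, by simp⟩
    | @union A B hA hB ihA ihB =>
      intro W hWopen h
      have hA' : V ∩ A = W ∩ A := by
        ext x
        constructor
        · rintro ⟨hxV, hxA⟩
          have hmem : x ∈ V ∩ (A ∪ B) := ⟨hxV, Or.inl hxA⟩
          rw [h] at hmem
          exact ⟨hmem.1, hxA⟩
        · rintro ⟨hxW, hxA⟩
          have hmem : x ∈ W ∩ (A ∪ B) := ⟨hxW, Or.inl hxA⟩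
          rw [← h] at hmem
          exact ⟨hmem.1, hxA⟩
      have hB' : V ∩ B = W ∩ B := by
        ext x
        constructor
        · rintro ⟨hxV, hxB⟩
          have hmem : x ∈ V ∩ (A ∪ B) := ⟨hxV, Or.inr hxB⟩
          rw [h] at hmem
          exact ⟨hmem.1, hxB⟩
        · rintro ⟨hxW, hxB⟩
          have hmem : x ∈ W ∩ (A ∪ B) := ⟨hxW, Or.inr hxB⟩
          rw [← h] at hmem
          exact ⟨hmem.1, hxB⟩
      obtain ⟨WA, hWAS, hWAW, hWA⟩ := ihA hWopen hA'
      obtain ⟨WB, hWBS, hWBW, hWB⟩ := ihB hWopen hB'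
      refine ⟨WA ∪ WB, hSgood.2.2.1 _ hWAS _ hWBS, union_subset hWAW hWBW, ?_⟩
      apply Set.Subset.antisymm
      · rintro x ⟨hxV, hxAB⟩
        rcases hxAB with hxA | hxB
        · have hmem : x ∈ WA ∩ A := hWA ▸ ⟨hxV, hxA⟩
          exact ⟨Or.inl hmem.1, Or.inl hmem.2⟩
        · have hmem : x ∈ WB ∩ B := hWB ▸ ⟨hxV, hxB⟩
          exact ⟨Or.inr hmem.1, Or.inr hmem.2⟩
      · rintro x ⟨hxW, hxAB⟩
        have hxW' : x ∈ W := by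
          rcases hxW with h' | h'
          · exact hWAW h'
          · exact hWBW h'
        exact (by rw [h]; exact ⟨hxW', hxAB⟩ : x ∈ V ∩ (A ∪ B))
  obtain ⟨W', hW'S, _, hEq⟩ := key hNF hWopen hWeq
  refine ⟨⟨W', hW'S, hEq⟩, ?_⟩
  -- compactness of `W' ∩ Z` for any normal form `Z`
  have compNF : ∀ {Z : Set X}, NF S Z → @IsCompact X (generateFrom S) (W' ∩ Z) := by
    intro Z hZ
    induction hZ with
    | @piece U C hU hC =>
      have hassoc : W' ∩ (U ∩ Cᶜ) = (W' ∩ U) ∩ Cᶜ := by rw [Set.inter_assoc]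
      rw [hassoc]
      have hWU : W' ∩ U ∈ S := hSgood.2.2.2 _ hW'S _ hU
      exact (hlpps _ hWU).inter_right
        (isClosed_compl_iff.2 (isOpen_generateFrom_of_mem hC))
    | empty => rw [Set.inter_empty]; exact isCompact_empty
    | union hA hB ihA ihB =>
      rw [Set.inter_union_distrib_left]
      exact ihA.union ihB
  have hcomp : @IsCompact X (generateFrom S) (V ∩ Y) := by
    rw [hEq]; exact compNF hNF
  -- transfer compactness to the subtype
  have hind : Topology.IsInducing (Subtype.val : Y → X) := Topology.IsInducing.subtypeVal
  have himg : (Subtype.val : Y → X) '' ((Subtype.val : Y → X) ⁻¹' V) = Y ∩ V :=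
    Subtype.image_preimage_coe Y V
  have hfin : IsCompact ((Subtype.val : Y → X) ⁻¹' V) := by
    rw [hind.isCompact_iff, himg, Set.inter_comm]
    exact hcomp
  exact hfin
end

section
/- An arbitrary product of pre-spectral spaces (with the product topology) is pre-spectral; moreover, the compact open sets of the product are exactly the finite unions of finite intersections of sets p_i^{-1}(K) where p_i is a projection and K is a compact open set of X_i. -/
open Set TopologicalSpace

/-!
The cylinders `p_i⁻¹(K)`, `K` compact open in `X_i`, form a subbasis of the product topology, since
each `X_i` carries the topology generated by its compact opens. A finite intersection of such
cylinders is a box `∏ C_i` with each `C_i` compact open (the compact opens of `X_i` being closed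
under `∩` and containing `X_i`), hence compact by Tychonoff. In any space with a subbasis whose
finite intersections are compact, these intersections form a basis of compact opens, so the compact
open sets are exactly the finite unions of them; such unions are closed under `∩` and `∪`.
-/

section Subbasis

variable {X : Type*} [t : TopologicalSpace X] {S : Set (Set X)}

lemma isCompact_isOpen_iff_of_subbasis (hS : t = generateFrom S)
    (hc : ∀ 𝒟 : Set (Set X), 𝒟.Finite → 𝒟 ⊆ S → IsCompact (⋂₀ 𝒟)) (U : Set X) :
    IsCompact U ∧ IsOpen U ↔ ∃ 𝒞 : Set (Set X), 𝒞.Finite ∧ U = ⋃₀ 𝒞 ∧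
      ∀ V ∈ 𝒞, ∃ 𝒟 : Set (Set X), 𝒟.Finite ∧ V = ⋂₀ 𝒟 ∧ 𝒟 ⊆ S := by
  have hB := isTopologicalBasis_of_subbasis hS
  constructor
  · rintro ⟨hUc, hUo⟩
    rw [image_eq_range] at hB
    obtain ⟨s, hs, rfl⟩ :=
      eq_finite_iUnion_of_isTopologicalBasis_of_isCompact_open _ hB U hUc hUo
    refine ⟨_, hs.image _, (sUnion_image _ _).symm, ?_⟩
    rintro _ ⟨⟨𝒟, h𝒟, h𝒟S⟩, -, rfl⟩
    exact ⟨𝒟, h𝒟, rfl, h𝒟S⟩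
  · rintro ⟨𝒞, h𝒞, rfl, h𝒞𝒟⟩
    have hV : ∀ V ∈ 𝒞, IsCompact V ∧ IsOpen V := by
      intro V hV
      obtain ⟨𝒟, h𝒟, rfl, h𝒟S⟩ := h𝒞𝒟 V hV
      exact ⟨hc 𝒟 h𝒟 h𝒟S, hB.isOpen ⟨𝒟, ⟨h𝒟, h𝒟S⟩, rfl⟩⟩
    exact ⟨h𝒞.isCompact_sUnion fun V hV' => (hV V hV').1,
      isOpen_sUnion fun V hV' => (hV V hV').2⟩

lemma isCompact_inter_of_subbasis (hS : t = generateFrom S)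
    (hc : ∀ 𝒟 : Set (Set X), 𝒟.Finite → 𝒟 ⊆ S → IsCompact (⋂₀ 𝒟)) {U V : Set X}
    (hU : IsCompact U ∧ IsOpen U) (hV : IsCompact V ∧ IsOpen V) : IsCompact (U ∩ V) := by
  obtain ⟨𝒞, h𝒞, rfl, h𝒞𝒟⟩ := (isCompact_isOpen_iff_of_subbasis hS hc U).1 hU
  obtain ⟨𝒞', h𝒞', rfl, h𝒞'𝒟⟩ := (isCompact_isOpen_iff_of_subbasis hS hc V).1 hV
  rw [sUnion_inter_sUnion]
  refine (h𝒞.prod h𝒞').isCompact_biUnion fun p hp => ?_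
  obtain ⟨𝒟, h𝒟, hp₁, h𝒟S⟩ := h𝒞𝒟 p.1 hp.1
  obtain ⟨𝒟', h𝒟', hp₂, h𝒟'S⟩ := h𝒞'𝒟 p.2 hp.2
  rw [hp₁, hp₂, ← sInter_union]
  exact hc _ (h𝒟.union h𝒟') (union_subset h𝒟S h𝒟'S)

lemma IsPreSpectral.of_subbasis (hS : t = generateFrom S)
    (hc : ∀ 𝒟 : Set (Set X), 𝒟.Finite → 𝒟 ⊆ S → IsCompact (⋂₀ 𝒟)) : IsPreSpectral t := by
  have hSco : S ⊆ {U | IsCompact U ∧ IsOpen U} := fun W hW =>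
    ⟨by simpa using hc {W} (finite_singleton W) (singleton_subset_iff.2 hW),
      hS ▸ isOpen_generateFrom_of_mem hW⟩
  have huniv : IsCompact (univ : Set X) := by simpa using hc ∅ finite_empty (empty_subset S)
  refine ⟨⟨⟨isCompact_empty, isOpen_empty⟩, ⟨huniv, isOpen_univ⟩,
    fun U hU V hV => ⟨hU.1.union hV.1, IsOpen.union hU.2 hV.2⟩,
    fun U hU V hV => ⟨isCompact_inter_of_subbasis hS hc hU hV, IsOpen.inter hU.2 hV.2⟩⟩, ?_⟩
  exact le_antisymm ((generateFrom_anti hSco).trans_eq hS.symm)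
    (le_generateFrom fun U hU => hU.2)

end Subbasis

lemma IsBoundedSublattice.finiteInter {X : Type*} {L : Set (Set X)}
    (hL : IsBoundedSublattice L) : FiniteInter L :=
  ⟨hL.2.1, fun U hU V hV => hL.2.2.2 U hU V hV⟩

section Pi

variable {ι : Type*} (Xs : ι → Type*) [∀ i, TopologicalSpace (Xs i)]

def compactOpenCylinders : Set (Set (∀ i, Xs i)) :=
  {W | ∃ (i : ι) (K : Set (Xs i)), IsCompact K ∧ IsOpen K ∧
    W = (fun f : ∀ i, Xs i => f i) ⁻¹' K}

variable {Xs}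

lemma pi_eq_generateFrom_compactOpenCylinders
    (h : ∀ i, generateFrom {K : Set (Xs i) | IsCompact K ∧ IsOpen K} =
      (inferInstance : TopologicalSpace (Xs i))) :
    (inferInstance : TopologicalSpace (∀ i, Xs i)) =
      generateFrom (compactOpenCylinders Xs) := by
  have hcyl : compactOpenCylinders Xs =
      ⋃ i, preimage (fun f : ∀ i, Xs i => f i) '' {K : Set (Xs i) | IsCompact K ∧ IsOpen K} := by
    ext W
    simp [compactOpenCylinders, and_assoc, eq_comm]
  rw [hcyl, generateFrom_iUnion]
  simp_rw [← induced_generateFrom_eq, h]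
  rfl

lemma isCompact_sInter_compactOpenCylinders
    (h : ∀ i, FiniteInter {K : Set (Xs i) | IsCompact K ∧ IsOpen K})
    {𝒟 : Set (Set (∀ i, Xs i))} (h𝒟 : 𝒟.Finite) (h𝒟S : 𝒟 ⊆ compactOpenCylinders Xs) :
    IsCompact (⋂₀ 𝒟) := by
  classical
  let boxes : Set (Set (∀ i, Xs i)) :=
    {B | ∃ C : ∀ i, Set (Xs i), (∀ i, IsCompact (C i) ∧ IsOpen (C i)) ∧ B = univ.pi C}
  have hboxes : FiniteInter boxes := by
    refine ⟨⟨fun _ => univ, fun i => (h i).univ_mem, pi_univ univ |>.symm⟩, ?_⟩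
    rintro _ ⟨C, hC, rfl⟩ _ ⟨C', hC', rfl⟩
    exact ⟨fun i => C i ∩ C' i, fun i => (h i).inter_mem (hC i) (hC' i), pi_inter_distrib.symm⟩
  have hcyl : compactOpenCylinders Xs ⊆ boxes := by
    rintro _ ⟨i, K, hKc, hKo, rfl⟩
    refine ⟨Function.update (fun _ => univ) i K, fun j => ?_, (univ_pi_update_univ i K).symm⟩
    by_cases hj : j = i
    · subst hj
      simpa using ⟨hKc, hKo⟩
    · simpa [hj] using (h j).univ_mem
  lift 𝒟 to Finset (Set (∀ i, Xs i)) using h𝒟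
  obtain ⟨C, hC, hCeq⟩ := hboxes.finiteInter_mem 𝒟 (h𝒟S.trans hcyl)
  rw [hCeq]
  exact isCompact_univ_pi fun i => (hC i).1

end Pi

theorem prespectral_pi {ι : Type*} (Xs : ι → Type*) [∀ i, TopologicalSpace (Xs i)]
    (h : ∀ i, IsPreSpectral (inferInstance : TopologicalSpace (Xs i))) :
    IsPreSpectral (inferInstance : TopologicalSpace (∀ i, Xs i)) ∧
    ∀ U : Set (∀ i, Xs i), (IsCompact U ∧ IsOpen U) ↔
      ∃ 𝒞 : Set (Set (∀ i, Xs i)), 𝒞.Finite ∧ U = ⋃₀ 𝒞 ∧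
        ∀ V ∈ 𝒞, ∃ 𝒟 : Set (Set (∀ i, Xs i)), 𝒟.Finite ∧ V = ⋂₀ 𝒟 ∧
          ∀ W ∈ 𝒟, ∃ (i : ι) (K : Set (Xs i)), IsCompact K ∧ IsOpen K ∧
            W = (fun f : ∀ i, Xs i => f i) ⁻¹' K := by
  have hS := pi_eq_generateFrom_compactOpenCylinders fun i => (h i).2
  have hc : ∀ 𝒟, 𝒟.Finite → 𝒟 ⊆ compactOpenCylinders Xs → IsCompact (⋂₀ 𝒟) :=
    fun _ => isCompact_sInter_compactOpenCylinders fun i => (h i).1.finiteInter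
  exact ⟨.of_subbasis hS hc, isCompact_isOpen_iff_of_subbasis hS hc⟩
end

section
/- Let Z be a set, L a bounded sublattice of ℘(Z), τ_L the topology generated by L and the complements of sets of L, and X ⊆ Y ⊆ X̄ where X̄ is the closure of X in τ_L. Let τ be a topology on Y, and write L_S := {U ∩ S | U ∈ L} for S ⊆ Z, and τ_X the topology induced by τ on X. If every set in τ_X ∩ L_X is compact in (X, ⟨τ_X ∩ L_X⟩), then every set in τ ∩ L_Y is compact in (Y, ⟨τ ∩ L_Y⟩). -/
open Set TopologicalSpace

theorem logical_closure_lifting {Z : Type*} (L : Set (Set Z))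
    (hL : IsBoundedSublattice L) (X Y : Set Z) (hXY : X ⊆ Y)
    (hYcl : Y ⊆ @closure Z (generateFrom (L ∪ {V : Set Z | ∃ W ∈ L, V = Wᶜ})) X)
    (τ : TopologicalSpace ↥Y)
    (hlppsX : ∀ V ∈ {V : Set ↥X | (τ.induced (Set.inclusion hXY)).IsOpen V} ∩
        {V : Set ↥X | ∃ U ∈ L, V = (Subtype.val : ↥X → Z) ⁻¹' U},
      @IsCompact ↥X
        (generateFrom ({V : Set ↥X | (τ.induced (Set.inclusion hXY)).IsOpen V} ∩
          {V : Set ↥X | ∃ U ∈ L, V = (Subtype.val : ↥X → Z) ⁻¹' U})) V) :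
    ∀ V ∈ {V : Set ↥Y | τ.IsOpen V} ∩
        {V : Set ↥Y | ∃ U ∈ L, V = (Subtype.val : ↥Y → Z) ⁻¹' U},
      @IsCompact ↥Y
        (generateFrom ({V : Set ↥Y | τ.IsOpen V} ∩
          {V : Set ↥Y | ∃ U ∈ L, V = (Subtype.val : ↥Y → Z) ⁻¹' U})) V := by
  classical
  intro V hV
  obtain ⟨hVopen, U, hUL, hVU⟩ := hV
  subst hVU
  set φ : ↥X → ↥Y := Set.inclusion hXY with hφ
  set CX : Set (Set ↥X) :=
    {V : Set ↥X | (τ.induced (Set.inclusion hXY)).IsOpen V} ∩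
      {V : Set ↥X | ∃ U ∈ L, V = (Subtype.val : ↥X → Z) ⁻¹' U} with hCX
  set CY : Set (Set ↥Y) :=
    {V : Set ↥Y | τ.IsOpen V} ∩
      {V : Set ↥Y | ∃ U ∈ L, V = (Subtype.val : ↥Y → Z) ⁻¹' U} with hCY
  letI tX : TopologicalSpace ↥X := generateFrom CX
  letI tY : TopologicalSpace ↥Y := generateFrom CY
  letI tL : TopologicalSpace Z :=
    generateFrom (L ∪ {V : Set Z | ∃ W ∈ L, V = Wᶜ})
  have hvalφ : ∀ x : ↥X, ((φ x : ↥Y) : Z) = (x : Z) := fun x => rfl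
  -- preimage under φ of a CY set is a CX set
  have hpre : ∀ W ∈ CY, φ ⁻¹' W ∈ CX := by
    rintro W ⟨hWo, U', hU'L, rfl⟩
    refine ⟨⟨_, hWo, rfl⟩, U', hU'L, rfl⟩
  -- the restriction of V to X is compact
  have hVX : IsCompact ((Subtype.val : ↥X → Z) ⁻¹' U) := by
    have h : (Subtype.val : ↥X → Z) ⁻¹' U = φ ⁻¹' ((Subtype.val : ↥Y → Z) ⁻¹' U) := rfl
    apply hlppsX
    rw [h]
    exact hpre _ ⟨hVopen, U, hUL, rfl⟩
  rw [isCompact_iff_finite_subcover]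
  intro ι O hO hcov
  -- choose for each point of V a basic set inside some O i
  have hbasic : ∀ y : ↥Y, y ∈ (Subtype.val : ↥Y → Z) ⁻¹' U → ∃ W ∈ CY, ∃ i : ι, y ∈ W ∧ W ⊆ O i := by
    intro y hy
    obtain ⟨i, hi⟩ := Set.mem_iUnion.mp (hcov hy)
    -- O i is open in generateFrom CY; induct on generation
    have : ∀ s : Set ↥Y, GenerateOpen CY s → ∀ z ∈ s, ∃ W ∈ CY, z ∈ W ∧ W ⊆ s := by
      intro s hs
      induction hs with
      | basic t ht => exact fun z hz => ⟨t, ht, hz, subset_rfl⟩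
      | univ =>
        intro z _
        refine ⟨(Subtype.val : ↥Y → Z) ⁻¹' Set.univ, ⟨?_, Set.univ, hL.2.1, rfl⟩, by simp, by simp⟩
        simp only [Set.preimage_univ]
        exact @isOpen_univ _ τ
      | inter t₁ t₂ _ _ ih₁ ih₂ =>
        rintro z ⟨hz₁, hz₂⟩
        obtain ⟨W₁, hW₁, hzW₁, hW₁s⟩ := ih₁ z hz₁
        obtain ⟨W₂, hW₂, hzW₂, hW₂s⟩ := ih₂ z hz₂
        obtain ⟨⟨hW₁o, U₁, hU₁, rfl⟩, ⟨hW₂o, U₂, hU₂, rfl⟩⟩ := And.intro hW₁ hW₂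
        refine ⟨(Subtype.val : ↥Y → Z) ⁻¹' (U₁ ∩ U₂),
          ⟨@IsOpen.inter _ τ _ _ hW₁o hW₂o, U₁ ∩ U₂, hL.2.2.2 _ hU₁ _ hU₂, rfl⟩,
          ⟨hzW₁, hzW₂⟩, ?_⟩
        rw [Set.preimage_inter]
        exact Set.inter_subset_inter hW₁s hW₂s
      | sUnion S _ ih =>
        rintro z ⟨t, htS, hzt⟩
        obtain ⟨W, hW, hzW, hWs⟩ := ih t htS z hzt
        exact ⟨W, hW, hzW, hWs.trans (Set.subset_sUnion_of_mem htS)⟩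
    obtain ⟨W, hW, hyW, hWO⟩ := this (O i) (hO i) y hi
    exact ⟨W, hW, i, hyW, hWO⟩
  choose W hWCY idx hmemW hWO using hbasic
  choose U' hU'L hWU' using fun (y : ↥Y) (hy : y ∈ _) => (hWCY y hy).2
  -- cover the restriction of V to X by the preimages of the W's
  obtain ⟨F, hF⟩ := hVX.elim_finite_subcover (fun y : ((Subtype.val : ↥Y → Z) ⁻¹' U) => φ ⁻¹' W y.1 y.2)
    (fun y => isOpen_generateFrom_of_mem (hpre _ (hWCY y.1 y.2)))
    (by
      intro x hx
      have hxV : φ x ∈ (Subtype.val : ↥Y → Z) ⁻¹' U := hx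
      exact Set.mem_iUnion.mpr ⟨⟨φ x, hxV⟩, hmemW _ hxV⟩)
  -- density argument: V is covered by the finitely many W's
  have hcovV : (Subtype.val : ↥Y → Z) ⁻¹' U ⊆ ⋃ y ∈ F, W y.1 y.2 := by
    intro z hz
    by_contra hzc
    simp only [Set.mem_iUnion, not_exists] at hzc
    set A : Set Z := U ∩ ⋂ y ∈ F, (U' y.1 y.2)ᶜ with hA
    have hAopen : IsOpen A := by
      refine IsOpen.inter (isOpen_generateFrom_of_mem (Or.inl hUL)) ?_
      refine isOpen_biInter_finset fun y _ => ?_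
      exact isOpen_generateFrom_of_mem (Or.inr ⟨U' y.1 y.2, hU'L y.1 y.2, rfl⟩)
    have hzA : (z : Z) ∈ A := by
      refine ⟨hz, ?_⟩
      refine Set.mem_iInter₂.mpr fun y hy => ?_
      intro hzU'
      exact hzc y hy (by rw [hWU' y.1 y.2]; exact hzU')
    obtain ⟨x, hxA, hxX⟩ :=
      mem_closure_iff.mp (hYcl z.2) A hAopen hzA
    have hxU : (⟨x, hxX⟩ : ↥X) ∈ (Subtype.val : ↥X → Z) ⁻¹' U := hxA.1
    obtain ⟨y, hyF⟩ := Set.mem_iUnion₂.mp (hF hxU)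
    have : x ∈ U' y.1 y.2 := by
      have := hyF.2
      rwa [hWU' y.1 y.2] at this
    exact (Set.mem_iInter₂.mp hxA.2 y hyF.1) this
  refine ⟨F.image (fun y => idx y.1 y.2), fun z hz => ?_⟩
  obtain ⟨y, hyF, hyW⟩ := Set.mem_iUnion₂.mp (hcovV hz)
  exact Set.mem_iUnion₂.mpr ⟨idx y.1 y.2, Finset.mem_image_of_mem _ hyF,
    hWO y.1 y.2 hyW⟩
end

section
/- Let F = (X_i, f_{i,j})_{i ∈ I} be a projective system of pre-spectral spaces and spectral bonding maps indexed by a nonempty directed poset I, and suppose {f_i : X → X_i} is its limit in the category of topological spaces, where each f_i is a spectral map. Then X is pre-spectral, the compact open sets of X are exactly the sets f_i^{-1}(V) for i ∈ I and V compact open in X_i, and X is the limit of F in the category of pre-spectral spaces with spectral maps. -/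
open Set TopologicalSpace

/-- A spectral map w.r.t. explicit topologies: continuous, and preimages of
compact open sets are compact open. -/
def IsSpectralTo {A B : Type*} (tA : TopologicalSpace A) (tB : TopologicalSpace B)
    (f : A → B) : Prop :=
  @Continuous A B tA tB f ∧
    ∀ V : Set B, @IsCompact B tB V → tB.IsOpen V →
      @IsCompact A tA (f ⁻¹' V) ∧ tA.IsOpen (f ⁻¹' V)

universe u

/-!
The universal property forces `X` to carry the initial topology of the `f i`, which is generated
by the sets `f i ⁻¹' V` with `V` compact open in `X i`. Since `ι` is directed and the bonding maps
are spectral, these sets form a directed union of bounded sublattices, hence a bounded sublattice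
of compact opens of `X`; being a basis closed under finite unions, it contains every compact open.
Spectrality of a map into `X` then only has to be tested on the sets `f i ⁻¹' V`.
-/

open Topology

def compactOpenSets {X : Type*} (t : TopologicalSpace X) : Set (Set X) :=
  {U | @IsCompact X t U ∧ IsOpen[t] U}

namespace IsBoundedSublattice

variable {X : Type*} {L : Set (Set X)}

theorem image_preimage {Y : Type*} (hL : IsBoundedSublattice L) (f : Y → X) :
    IsBoundedSublattice (preimage f '' L) := by
  obtain ⟨h_empty, h_univ, h_union, h_inter⟩ := hL
  refine ⟨⟨∅, h_empty, preimage_empty⟩, ⟨univ, h_univ, preimage_univ⟩, ?_, ?_⟩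
  · rintro _ ⟨U, hU, rfl⟩ _ ⟨V, hV, rfl⟩
    exact ⟨U ∪ V, h_union U hU V hV, preimage_union⟩
  · rintro _ ⟨U, hU, rfl⟩ _ ⟨V, hV, rfl⟩
    exact ⟨U ∩ V, h_inter U hU V hV, preimage_inter⟩

theorem iUnion_of_directed {ι : Type*} [Nonempty ι] {L : ι → Set (Set X)}
    (hdir : Directed (· ⊆ ·) L) (hL : ∀ i, IsBoundedSublattice (L i)) :
    IsBoundedSublattice (⋃ i, L i) := by
  obtain ⟨i₀⟩ := ‹Nonempty ι›
  have h_binary : ∀ (op : Set X → Set X → Set X),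
      (∀ i, ∀ U ∈ L i, ∀ V ∈ L i, op U V ∈ L i) →
      ∀ U ∈ ⋃ i, L i, ∀ V ∈ ⋃ i, L i, op U V ∈ ⋃ i, L i := by
    intro op hop U hU V hV
    obtain ⟨i, hUi⟩ := mem_iUnion.mp hU
    obtain ⟨j, hVj⟩ := mem_iUnion.mp hV
    obtain ⟨k, hik, hjk⟩ := hdir i j
    exact mem_iUnion.mpr ⟨k, hop k U (hik hUi) V (hjk hVj)⟩
  exact ⟨mem_iUnion.mpr ⟨i₀, (hL i₀).1⟩, mem_iUnion.mpr ⟨i₀, (hL i₀).2.1⟩,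
    h_binary (· ∪ ·) fun i => (hL i).2.2.1, h_binary (· ∩ ·) fun i => (hL i).2.2.2⟩

theorem isTopologicalBasis {t : TopologicalSpace X} (hL : IsBoundedSublattice L)
    (hgen : generateFrom L = t) : IsTopologicalBasis L := by
  have := isTopologicalBasis_of_subbasis_of_inter hgen.symm fun U hU V hV => hL.2.2.2 U hU V hV
  rwa [insert_eq_of_mem hL.2.1] at this

theorem compactOpenSets_eq {t : TopologicalSpace X} (hL : IsBoundedSublattice L)
    (hco : L ⊆ compactOpenSets t) (hgen : generateFrom L = t) : compactOpenSets t = L := by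
  refine Subset.antisymm (fun U ⟨hUc, hUo⟩ => ?_) hco
  obtain ⟨s, rfl⟩ := eq_sUnion_finset_of_isTopologicalBasis_of_isCompact_open L
    (hL.isTopologicalBasis hgen) U hUc hUo
  have := Finset.sup_mem L hL.1 hL.2.2.1 s Subtype.val fun V _ => V.2
  simpa [Finset.sup_set_eq_biUnion, sUnion_eq_biUnion] using this

theorem isPreSpectral {t : TopologicalSpace X} (hL : IsBoundedSublattice L)
    (hco : L ⊆ compactOpenSets t) (hgen : generateFrom L = t) : IsPreSpectral t := by
  change IsBoundedSublattice (compactOpenSets t) ∧ generateFrom (compactOpenSets t) = t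
  rw [hL.compactOpenSets_eq hco hgen]
  exact ⟨hL, hgen⟩

end IsBoundedSublattice

theorem IsSpectralTo.image_preimage_compactOpenSets_subset {A B C : Type*}
    {tB : TopologicalSpace B} {tC : TopologicalSpace C} {p : B → C} (hp : IsSpectralTo tB tC p)
    {fB : A → B} {fC : A → C} (hfp : p ∘ fB = fC) :
    preimage fC '' compactOpenSets tC ⊆ preimage fB '' compactOpenSets tB := by
  rintro _ ⟨V, ⟨hVc, hVo⟩, rfl⟩
  exact ⟨p ⁻¹' V, hp.2 V hVc hVo, by rw [← preimage_comp, hfp]⟩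

theorem IsSpectralTo.of_comp {ι Z X : Type*} {Xs : ι → Type*} {tZ : TopologicalSpace Z}
    {tX : TopologicalSpace X} {ts : ∀ i, TopologicalSpace (Xs i)} {f : ∀ i, X → Xs i}
    {m : Z → X} (hm : Continuous[tZ, tX] m)
    (hX : compactOpenSets tX ⊆ ⋃ i, preimage (f i) '' compactOpenSets (ts i))
    (hfm : ∀ i, IsSpectralTo tZ (ts i) (f i ∘ m)) : IsSpectralTo tZ tX m := by
  refine ⟨hm, fun U hUc hUo => ?_⟩
  obtain ⟨i, V, ⟨hVc, hVo⟩, rfl⟩ := mem_iUnion.mp (hX ⟨hUc, hUo⟩)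
  exact (hfm i).2 V hVc hVo

section InitialTopology

variable {ι X : Type*} {Xs : ι → Type*} {ts : ∀ i, TopologicalSpace (Xs i)} {f : ∀ i, X → Xs i}

theorem eq_iInf_induced_of_existsUnique_lift {tX : TopologicalSpace X}
    (hf : ∀ i, Continuous[tX, ts i] (f i))
    (hlift : ∀ t : TopologicalSpace X, (∀ i, Continuous[t, ts i] (f i)) →
      ∃! m : X → X, Continuous[t, tX] m ∧ ∀ i, f i ∘ m = f i) :
    tX = ⨅ i, (ts i).induced (f i) := by
  set tInit := ⨅ i, (ts i).induced (f i)
  have hle : tX ≤ tInit := le_iInf fun i => continuous_iff_le_induced.mp (hf i)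
  obtain ⟨m, ⟨hm, hmf⟩, -⟩ :=
    hlift tInit fun i => continuous_iff_le_induced.mpr (iInf_le _ i)
  obtain ⟨_, -, hunique⟩ := hlift tX hf
  have hm_id : m = id :=
    (hunique m ⟨continuous_le_dom hle hm, hmf⟩).trans
      (hunique id ⟨@continuous_id X tX, fun _ => rfl⟩).symm
  exact le_antisymm hle (continuous_id_iff_le.mp (hm_id ▸ hm))

theorem generateFrom_iUnion_image_preimage_compactOpenSets
    (hXs : ∀ i, IsPreSpectral (ts i)) :
    generateFrom (⋃ i, preimage (f i) '' compactOpenSets (ts i)) =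
      ⨅ i, (ts i).induced (f i) := by
  rw [generateFrom_iUnion]
  refine iInf_congr fun i => ?_
  rw [← induced_generateFrom_eq]
  exact congrArg _ (hXs i).2

end InitialTopology

theorem projective_limit_transfer_general {ι : Type u} [Preorder ι] [Nonempty ι]
    (hdir : ∀ i j : ι, ∃ k, i ≤ k ∧ j ≤ k)
    (Xs : ι → Type u) (ts : ∀ i, TopologicalSpace (Xs i))
    (b : ∀ i j : ι, j ≤ i → Xs i → Xs j)
    (hb_spec : ∀ (i j : ι) (h : j ≤ i), IsSpectralTo (ts i) (ts j) (b i j h))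
    (hXs : ∀ i, IsPreSpectral (ts i))
    (X : Type u) (tX : TopologicalSpace X) (f : ∀ i, X → Xs i)
    (hf_spec : ∀ i, IsSpectralTo tX (ts i) (f i))
    (hf_compat : ∀ (i j : ι) (h : j ≤ i) (x : X), b i j h (f i x) = f j x)
    (hlimTop : ∀ (Z : Type u) (tZ : TopologicalSpace Z) (g : ∀ i, Z → Xs i),
      (∀ i, @Continuous Z (Xs i) tZ (ts i) (g i)) →
      (∀ (i j : ι) (h : j ≤ i) (z : Z), b i j h (g i z) = g j z) →
      ∃! m : Z → X, @Continuous Z X tZ tX m ∧ ∀ i, f i ∘ m = g i) :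
    IsPreSpectral tX ∧
    ({U : Set X | @IsCompact X tX U ∧ tX.IsOpen U}
      = {U : Set X | ∃ (i : ι) (V : Set (Xs i)),
          @IsCompact (Xs i) (ts i) V ∧ (ts i).IsOpen V ∧ U = f i ⁻¹' V}) ∧
    (∀ (Z : Type u) (tZ : TopologicalSpace Z), IsPreSpectral tZ →
      ∀ g : ∀ i, Z → Xs i, (∀ i, IsSpectralTo tZ (ts i) (g i)) →
      (∀ (i j : ι) (h : j ≤ i) (z : Z), b i j h (g i z) = g j z) →
      ∃! m : Z → X, IsSpectralTo tZ tX m ∧ ∀ i, f i ∘ m = g i) := by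
  set S := ⋃ i, preimage (f i) '' compactOpenSets (ts i)
  have hgen : generateFrom S = tX :=
    (generateFrom_iUnion_image_preimage_compactOpenSets hXs).trans
      (eq_iInf_induced_of_existsUnique_lift (fun i => (hf_spec i).1)
        fun t ht => hlimTop X t f ht hf_compat).symm
  have hS_directed : Directed (· ⊆ ·) fun i => preimage (f i) '' compactOpenSets (ts i) :=
    fun i j => (hdir i j).imp fun k ⟨hik, hjk⟩ =>
      ⟨(hb_spec k i hik).image_preimage_compactOpenSets_subset (funext (hf_compat k i hik)),
        (hb_spec k j hjk).image_preimage_compactOpenSets_subset (funext (hf_compat k j hjk))⟩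
  have hS_lattice : IsBoundedSublattice S :=
    .iUnion_of_directed hS_directed fun i => (hXs i).1.image_preimage (f i)
  have hS_sub : S ⊆ compactOpenSets tX := iUnion_subset fun i => by
    rintro _ ⟨V, ⟨hVc, hVo⟩, rfl⟩
    exact (hf_spec i).2 V hVc hVo
  have hS : compactOpenSets tX = S := hS_lattice.compactOpenSets_eq hS_sub hgen
  refine ⟨hS_lattice.isPreSpectral hS_sub hgen, ?_, ?_⟩
  · change compactOpenSets tX = _
    rw [hS]
    ext U
    simp only [S, compactOpenSets, mem_iUnion, mem_image, mem_ofPred_eq, eq_comm, and_assoc]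
    exact Iff.rfl
  · intro Z tZ _ g hg hg_compat
    obtain ⟨m, ⟨hm, hmf⟩, hm_unique⟩ := hlimTop Z tZ g (fun i => (hg i).1) hg_compat
    refine ⟨m, ⟨.of_comp hm hS.subset fun i => hmf i ▸ hg i, hmf⟩, ?_⟩
    exact fun m' hm' => hm_unique m' ⟨hm'.1.1, hm'.2⟩

theorem projective_limit_transfer {ι : Type u} [Preorder ι] [Nonempty ι]
    (hdir : ∀ i j : ι, ∃ k, i ≤ k ∧ j ≤ k)
    (Xs : ι → Type u) (ts : ∀ i, TopologicalSpace (Xs i))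
    (b : ∀ i j : ι, j ≤ i → Xs i → Xs j)
    (hb_id : ∀ (i : ι) (x : Xs i), b i i le_rfl x = x)
    (hb_comp : ∀ (i j k : ι) (hji : j ≤ i) (hkj : k ≤ j) (x : Xs i),
      b j k hkj (b i j hji x) = b i k (hkj.trans hji) x)
    (hb_spec : ∀ (i j : ι) (h : j ≤ i), IsSpectralTo (ts i) (ts j) (b i j h))
    (hXs : ∀ i, IsPreSpectral (ts i))
    (X : Type u) (tX : TopologicalSpace X) (f : ∀ i, X → Xs i)
    (hf_spec : ∀ i, IsSpectralTo tX (ts i) (f i))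
    (hf_compat : ∀ (i j : ι) (h : j ≤ i) (x : X), b i j h (f i x) = f j x)
    (hlimTop : ∀ (Z : Type u) (tZ : TopologicalSpace Z) (g : ∀ i, Z → Xs i),
      (∀ i, @Continuous Z (Xs i) tZ (ts i) (g i)) →
      (∀ (i j : ι) (h : j ≤ i) (z : Z), b i j h (g i z) = g j z) →
      ∃! m : Z → X, @Continuous Z X tZ tX m ∧ ∀ i, f i ∘ m = g i) :
    IsPreSpectral tX ∧
    ({U : Set X | @IsCompact X tX U ∧ tX.IsOpen U}
      = {U : Set X | ∃ (i : ι) (V : Set (Xs i)),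
          @IsCompact (Xs i) (ts i) V ∧ (ts i).IsOpen V ∧ U = f i ⁻¹' V}) ∧
    (∀ (Z : Type u) (tZ : TopologicalSpace Z), IsPreSpectral tZ →
      ∀ g : ∀ i, Z → Xs i, (∀ i, IsSpectralTo tZ (ts i) (g i)) →
      (∀ (i j : ι) (h : j ≤ i) (z : Z), b i j h (g i z) = g j z) →
      ∃! m : Z → X, IsSpectralTo tZ tX m ∧ ∀ i, f i ∘ m = g i) :=
  projective_limit_transfer_general hdir Xs ts b hb_spec hXs X tX f hf_spec hf_compat hlimTop
end

section
/- Every pre-spectral space X is (isomorphic to) the limit, in the category of pre-spectral spaces and spectral maps, of a projective system of Noetherian spaces; specifically, of the system indexed by the finite subsets K of the compact opens of X ordered by inclusion, where X_K is X with the topology generated by K and the bonding maps are the identity maps. -/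
open Set TopologicalSpace

/-! The topology generated by finitely many compact opens of `X` has only finitely many opens
(unions of finite intersections of the generators), so it is Noetherian, and each of its opens
lies in the lattice of compact opens of `X`; this makes all identity maps spectral. Since the
index system has the least element `∅`, a compatible cone `g` is constant. Its value `g ∅` is
spectral into `X` because every compact open `U` of `X` is open and compact already in the
topology generated by `{U}`, and these sets generate the topology of `X`. -/

namespace IsBoundedSublattice

variable {X : Type*} {L : Set (Set X)}

theorem sInter_mem (hL : IsBoundedSublattice L) {T : Set (Set X)} (hT : T.Finite)
    (hTL : T ⊆ L) : ⋂₀ T ∈ L := by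
  induction T, hT using Set.Finite.induction_on with
  | empty => simpa using hL.2.1
  | insert _ _ ih =>
    rw [sInter_insert]
    exact hL.2.2.2 _ (hTL (mem_insert _ _)) _ (ih ((subset_insert _ _).trans hTL))

theorem sUnion_mem (hL : IsBoundedSublattice L) {T : Set (Set X)} (hT : T.Finite)
    (hTL : T ⊆ L) : ⋃₀ T ∈ L := by
  induction T, hT using Set.Finite.induction_on with
  | empty => simpa using hL.1
  | insert _ _ ih =>
    rw [sUnion_insert]
    exact hL.2.2.1 _ (hTL (mem_insert _ _)) _ (ih ((subset_insert _ _).trans hTL))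

end IsBoundedSublattice

section GenerateFrom

variable {X : Type*} {G : Set (Set X)}

theorem finite_image_sInter_of_finite (hG : G.Finite) :
    ((fun T => ⋂₀ T) '' {T : Set (Set X) | T.Finite ∧ T ⊆ G}).Finite :=
  (hG.finite_subsets.subset fun _ hT => hT.2).image _

theorem finite_setOf_isOpen_generateFrom (hG : G.Finite) :
    {s : Set X | (generateFrom G).IsOpen s}.Finite := by
  let _ := generateFrom G
  refine ((finite_image_sInter_of_finite hG).finite_subsets.image sUnion).subset fun s hs => ?_
  obtain ⟨S, hSB, rfl⟩ := (isTopologicalBasis_of_subbasis rfl).open_eq_sUnion hs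
  exact ⟨S, hSB, rfl⟩

theorem noetherianSpace_generateFrom (hG : G.Finite) : @NoetherianSpace X (generateFrom G) := by
  let _ := generateFrom G
  have := (finite_setOf_isOpen_generateFrom hG).to_subtype
  have : Finite (Opens X) :=
    Finite.of_injective
      (fun U : Opens X => (⟨U, U.isOpen⟩ : {s : Set X | (generateFrom G).IsOpen s}))
      fun _ _ h => SetLike.coe_injective (congrArg Subtype.val h)
  infer_instance

theorem IsBoundedSublattice.mem_of_isOpen_generateFrom {L : Set (Set X)}
    (hL : IsBoundedSublattice L) (hG : G.Finite) (hGL : G ⊆ L) {s : Set X}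
    (hs : (generateFrom G).IsOpen s) : s ∈ L := by
  let _ := generateFrom G
  obtain ⟨S, hSB, rfl⟩ := (isTopologicalBasis_of_subbasis rfl).open_eq_sUnion hs
  refine hL.sUnion_mem ((finite_image_sInter_of_finite hG).subset hSB) fun _ hu => ?_
  obtain ⟨T, ⟨hT, hTG⟩, rfl⟩ := hSB hu
  exact hL.sInter_mem hT (hTG.trans hGL)

end GenerateFrom

section Spectral

variable {X : Type*}

theorem isSpectralTo_id_generateFrom (t : TopologicalSpace X)
    (hL : IsBoundedSublattice {U : Set X | @IsCompact X t U ∧ t.IsOpen U}) {G : Set (Set X)}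
    (hG : G.Finite) (hGC : G ⊆ {U : Set X | @IsCompact X t U ∧ t.IsOpen U}) :
    IsSpectralTo t (generateFrom G) id :=
  ⟨continuous_id_iff_le.2 (le_generateFrom fun _ hs => (hGC hs).2),
    fun _ _ hV => hL.mem_of_isOpen_generateFrom hG hGC hV⟩

theorem isSpectralTo_id_generateFrom_of_subset {G G' : Set (Set X)} (hG : G.Finite)
    (hG'G : G' ⊆ G) : IsSpectralTo (generateFrom G) (generateFrom G') id := by
  have hle : generateFrom G ≤ generateFrom G' := generateFrom_anti hG'G
  have := noetherianSpace_generateFrom hG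
  exact ⟨continuous_id_iff_le.2 hle, fun V _ hV =>
    ⟨@NoetherianSpace.isCompact X (generateFrom G) this V, hle V hV⟩⟩

theorem isSpectralTo_of_forall_generateFrom_singleton {Z : Type*} {tZ : TopologicalSpace Z}
    {t : TopologicalSpace X}
    (ht : generateFrom {U : Set X | @IsCompact X t U ∧ t.IsOpen U} = t) {f : Z → X}
    (hf : ∀ U, @IsCompact X t U → t.IsOpen U → IsSpectralTo tZ (generateFrom {U}) f) :
    IsSpectralTo tZ t f := by
  refine ⟨?_, fun V hVc hVo => (hf V hVc hVo).2 V ?_ (isOpen_generateFrom_of_mem rfl)⟩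
  · rw [← ht]
    exact continuous_generateFrom_iff.2 fun U ⟨hUc, hUo⟩ =>
      @Continuous.isOpen_preimage Z X tZ (generateFrom {U}) f (hf U hUc hUo).1 U
        (isOpen_generateFrom_of_mem rfl)
  · exact @NoetherianSpace.isCompact X (generateFrom {V})
      (noetherianSpace_generateFrom (finite_singleton V)) V

end Spectral

universe u

theorem prespectral_is_limit_of_noetherian {X : Type u} (t : TopologicalSpace X)
    (hX : IsPreSpectral t) :
    (∀ K : Finset (Set X),
      ↑K ⊆ {U : Set X | @IsCompact X t U ∧ t.IsOpen U} →
      @NoetherianSpace X (generateFrom (↑K : Set (Set X)))) ∧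
    (∀ K : Finset (Set X),
      ↑K ⊆ {U : Set X | @IsCompact X t U ∧ t.IsOpen U} →
      IsSpectralTo t (generateFrom (↑K : Set (Set X))) id) ∧
    (∀ K K' : Finset (Set X),
      ↑K ⊆ {U : Set X | @IsCompact X t U ∧ t.IsOpen U} →
      ↑K' ⊆ {U : Set X | @IsCompact X t U ∧ t.IsOpen U} → K' ⊆ K →
      IsSpectralTo (generateFrom (↑K : Set (Set X)))
        (generateFrom (↑K' : Set (Set X))) id) ∧
    (∀ (Z : Type u) (tZ : TopologicalSpace Z), IsPreSpectral tZ →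
      ∀ g : Finset (Set X) → Z → X,
      (∀ K : Finset (Set X), ↑K ⊆ {U : Set X | @IsCompact X t U ∧ t.IsOpen U} →
        IsSpectralTo tZ (generateFrom (↑K : Set (Set X))) (g K)) →
      (∀ K K' : Finset (Set X),
        ↑K ⊆ {U : Set X | @IsCompact X t U ∧ t.IsOpen U} →
        ↑K' ⊆ {U : Set X | @IsCompact X t U ∧ t.IsOpen U} → K' ⊆ K → g K = g K') →
      ∃! m : Z → X, IsSpectralTo tZ t m ∧
        ∀ K : Finset (Set X), ↑K ⊆ {U : Set X | @IsCompact X t U ∧ t.IsOpen U} →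
          g K = m) := by
  refine ⟨fun K _ => noetherianSpace_generateFrom K.finite_toSet,
    fun K hK => isSpectralTo_id_generateFrom t hX.1 K.finite_toSet hK,
    fun K _ _ _ hK'K => isSpectralTo_id_generateFrom_of_subset K.finite_toSet
      (Finset.coe_subset.2 hK'K), ?_⟩
  intro Z tZ _ g hg hcompat
  have hempty : ((∅ : Finset (Set X)) : Set (Set X)) ⊆
      {U : Set X | @IsCompact X t U ∧ t.IsOpen U} := by simp
  have hg_eq : ∀ K : Finset (Set X), ↑K ⊆ {U : Set X | @IsCompact X t U ∧ t.IsOpen U} →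
      g K = g ∅ := fun K hK => hcompat K ∅ hK hempty K.empty_subset
  refine ⟨g ∅, ⟨?_, hg_eq⟩, fun m hm => (hm.2 ∅ hempty).symm⟩
  refine isSpectralTo_of_forall_generateFrom_singleton hX.2 fun U hUc hUo => ?_
  have hU : (({U} : Finset (Set X)) : Set (Set X)) ⊆
      {U : Set X | @IsCompact X t U ∧ t.IsOpen U} := by simpa using ⟨hUc, hUo⟩
  simpa [hg_eq {U} hU] using hg {U} hU
end
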